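/- Let f_i : ℝ^n → (−∞,∞], 1 ≤ i ≤ r, be proper closed functions with dom f_i = dom ∂f_i for all i, and let f := min_{1≤i≤r} f_i be continuous on dom ∂f. Suppose each f_i is a KL function with exponent α_i ∈ [0,1). Then f is a KL function with exponent α = max{α_i : 1 ≤ i ≤ r}. -/

import Mathlib

open Filter Topology Metric Set
open scoped RealInnerProductSpace

noncomputable section

variable {E : Type*} [NormedAddCommGroup E] [InnerProductSpace ℝ E]

/-- The effective domain of an extended-real-valued function. -/
def edomain (f : E → EReal) : Set E := {x | f x < ⊤}

/-- A proper function: never `⊥` and not identically `⊤`. -/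
def ProperFn (f : E → EReal) : Prop := (∀ x, f x ≠ ⊥) ∧ ∃ x, f x < ⊤

/-- The regular (Fréchet) subdifferential. -/
def regSubdiff (f : E → EReal) (x : E) : Set E :=
  {v | f x < ⊤ ∧ ∀ ε : ℝ, 0 < ε →
    ∀ᶠ z in 𝓝 x, f x + ((⟪v, z - x⟫ - ε * ‖z - x‖ : ℝ) : EReal) ≤ f z}

/-- The limiting (Mordukhovich) subdifferential. -/
def limSubdiff (f : E → EReal) (x : E) : Set E :=
  {v | f x < ⊤ ∧ ∃ (xs vs : ℕ → E),
    Tendsto xs atTop (𝓝 x) ∧ Tendsto (fun t => f (xs t)) atTop (𝓝 (f x)) ∧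
    Tendsto vs atTop (𝓝 v) ∧ ∀ t, vs t ∈ regSubdiff f (xs t)}

/-- The domain of the limiting subdifferential. -/
def subdiffDom (f : E → EReal) : Set E := {x | (limSubdiff f x).Nonempty}

/-- `f` satisfies the KL property at `xbar` with exponent `α`. -/
def KLAt (f : E → EReal) (xbar : E) (α : ℝ) : Prop :=
  ∃ c > (0:ℝ), ∃ ε > (0:ℝ), ∃ ν : EReal, 0 < ν ∧
    ∀ x : E, ‖x - xbar‖ ≤ ε → f xbar < f x → f x < f xbar + ν →
      ENNReal.ofReal (c * (f x - f xbar).toReal ^ α) ≤ EMetric.infEdist 0 (limSubdiff f x)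

/-- `f` is a KL function with exponent `α`. -/
def IsKL (f : E → EReal) (α : ℝ) : Prop := ∀ x ∈ subdiffDom f, KLAt f x α

open Classical in
/-- Indicator function of a set. -/
def indic (C : Set E) : E → EReal := fun x => if x ∈ C then 0 else ⊤

/-- `w` is the proximal point of `P` at `z`. -/
def IsProxPt (P : E → EReal) (z w : E) : Prop :=
  ∀ y : E, P w + ((1/2 * ‖w - z‖^2 : ℝ) : EReal) ≤ P y + ((1/2 * ‖y - z‖^2 : ℝ) : EReal)

/-- A polyhedral set: a finite intersection of closed half-spaces. -/
def IsPolyhedralSet {F : Type*} [AddCommGroup F] [Module ℝ F] (S : Set F) : Prop :=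
  ∃ (k : ℕ) (φ : Fin k → (F →ₗ[ℝ] ℝ)) (b : Fin k → ℝ), S = {x | ∀ i, φ i x ≤ b i}

/-- A proper closed polyhedral function: proper, closed, with polyhedral epigraph. -/
def IsPolyhedralFn (P : E → EReal) : Prop :=
  ProperFn P ∧ LowerSemicontinuous P ∧
    IsPolyhedralSet {p : E × ℝ | P p.1 ≤ (p.2 : EReal)}

/-- Convexity of an extended-real-valued function, via convexity of its epigraph. -/
def EConvex (f : E → EReal) : Prop := Convex ℝ {p : E × ℝ | f p.1 ≤ (p.2 : EReal)}

/-!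
Near `xbar` only the pieces active at `xbar` (those with `g i xbar = f xbar`) matter: by lower
semicontinuity an inactive piece stays above `f xbar + δ` near `xbar`. A limiting subgradient of
`f = ⨅ i, g i` at `x` is a limiting subgradient of a piece `g i` with `g i x = f x`: along a
subsequence one index realises the minimum, and lower semicontinuity forces `g i x = f x`. So every
`v ∈ ∂f(x)` lies in `∂g_i(x)` for a piece active at `xbar`, whose KL inequality bounds `‖v‖`; as
`f x - f xbar < 1`, the largest exponent works for all pieces at once.
-/

theorem LowerSemicontinuousAt.le_of_tendsto {α β γ : Type*} [TopologicalSpace α]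
    [CompleteLinearOrder γ] [TopologicalSpace γ] [OrderTopology γ] {g : α → γ} {x : α}
    {l : Filter β} [l.NeBot] {u : β → α} {y : γ} (hg : LowerSemicontinuousAt g x)
    (hu : Tendsto u l (𝓝 x)) (hgu : Tendsto (g ∘ u) l (𝓝 y)) : g x ≤ y :=
  calc g x ≤ liminf g (𝓝 x) := hg.le_liminf
    _ ≤ liminf (g ∘ u) l := hu.liminf_le_liminf_comp
    _ = y := hgu.liminf_eq

theorem EReal.eventually_add_coe_lt {a b : EReal} (h : a < b) :
    ∀ᶠ δ : ℝ in 𝓝 0, a + δ < b := by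
  have hcont : Tendsto (fun δ : ℝ => a + δ) (𝓝 0) (𝓝 (a + (0 : ℝ))) :=
    (EReal.continuousAt_add (p := (a, ((0 : ℝ) : EReal))) (Or.inr (by simp))
      (Or.inr (by simp))).tendsto.comp
      (tendsto_const_nhds.prodMk_nhds (continuous_coe_real_ereal.tendsto 0))
  rw [EReal.coe_zero, add_zero] at hcont
  exact hcont.eventually (gt_mem_nhds h)

theorem EReal.toReal_sub_mem_Ioo {a y : EReal} {δ : ℝ} (h₁ : a < y) (h₂ : y < a + δ) :
    (y - a).toReal ∈ Ioo 0 δ := by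
  induction a using EReal.rec with
  | bot => simp at h₂
  | top => simp at h₁
  | coe a =>
    induction y using EReal.rec with
    | bot => simp at h₁
    | top => exact absurd h₂ (not_lt.2 le_top)
    | coe y =>
      rw [← EReal.coe_sub, EReal.toReal_coe]
      norm_cast at h₁ h₂
      constructor <;> linarith

theorem regSubdiff_subset_of_le_of_eq {f g : E → EReal} {x : E} (hle : f ≤ g) (hx : g x = f x) :
    regSubdiff f x ⊆ regSubdiff g x := by
  rintro v ⟨hfx, hv⟩
  refine ⟨hx ▸ hfx, fun ε hε => ?_⟩
  filter_upwards [hv ε hε] with z hz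
  rw [hx]
  exact hz.trans (hle z)

theorem exists_mem_limSubdiff_of_mem_limSubdiff_iInf {ι : Type*} [Finite ι] {g : ι → E → EReal}
    {x v : E} (hg : ∀ i, LowerSemicontinuousAt (g i) x)
    (hv : v ∈ limSubdiff (fun z => ⨅ i, g i z) x) :
    ∃ i, g i x = ⨅ j, g j x ∧ v ∈ limSubdiff (g i) x := by
  obtain ⟨hx, xs, vs, hxs, hfxs, hvs, hreg⟩ := hv
  have : Nonempty ι := let ⟨i, _⟩ := iInf_lt_iff.1 hx; ⟨i⟩
  obtain ⟨i, hi⟩ : ∃ i, ∃ᶠ t in atTop, g i (xs t) = ⨅ j, g j (xs t) :=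
    frequently_exists.1 (Eventually.of_forall fun t => exists_eq_ciInf_of_finite).frequently
  obtain ⟨φ, hφ, hφi⟩ := extraction_of_frequently_atTop hi
  have hxφ : Tendsto (xs ∘ φ) atTop (𝓝 x) := hxs.comp hφ.tendsto_atTop
  have hgφ : Tendsto (g i ∘ xs ∘ φ) atTop (𝓝 (⨅ j, g j x)) := by
    simpa only [Function.comp_def, hφi] using hfxs.comp hφ.tendsto_atTop
  have hix : g i x = ⨅ j, g j x := ((hg i).le_of_tendsto hxφ hgφ).antisymm (iInf_le _ i)
  refine ⟨i, hix, hix ▸ hx, xs ∘ φ, vs ∘ φ, hxφ, hix ▸ hgφ, hvs.comp hφ.tendsto_atTop, fun t => ?_⟩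
  exact regSubdiff_subset_of_le_of_eq (fun z => iInf_le _ i) (hφi t) (hreg (φ t))

def KLBound (f : E → EReal) (xbar : E) (α δ : ℝ) : Prop :=
  ∀ x : E, ‖x - xbar‖ ≤ δ → f xbar < f x → f x < f xbar + δ →
    ENNReal.ofReal (δ * (f x - f xbar).toReal ^ α) ≤ Metric.infEDist 0 (limSubdiff f x)

-- Taking the three constants of `KLAt` equal lets finitely many KL properties be combined by
-- `Filter.eventually_all`.
theorem klAt_iff_eventually_klBound {f : E → EReal} {xbar : E} {α : ℝ} :
    KLAt f xbar α ↔ ∀ᶠ δ in 𝓝[>] (0 : ℝ), KLBound f xbar α δ := by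
  constructor
  · rintro ⟨c, hc, ε, hε, ν, hν, H⟩
    obtain ⟨s, hs, hsν⟩ := EReal.lt_iff_exists_real_btwn.1 hν
    have hs : (0 : ℝ) < s := by exact_mod_cast hs
    filter_upwards [Ioo_mem_nhdsGT (lt_min hc (lt_min hε hs))] with δ hδ x hx h₁ h₂
    simp only [mem_Ioo, lt_min_iff] at hδ
    have hνδ : f x < f xbar + ν :=
      h₂.trans_le (add_le_add_right ((EReal.coe_le_coe_iff.2 hδ.2.2.2.le).trans hsν.le) _)
    refine le_trans (ENNReal.ofReal_le_ofReal ?_) (H x (hx.trans hδ.2.2.1.le) h₁ hνδ)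
    have ht := (EReal.toReal_sub_mem_Ioo h₁ h₂).1
    exact mul_le_mul_of_nonneg_right hδ.2.1.le (Real.rpow_nonneg ht.le _)
  · intro h
    obtain ⟨δ, hδ, hδ0⟩ := (h.and self_mem_nhdsWithin).exists
    exact ⟨δ, hδ0, δ, hδ0, δ, by exact_mod_cast hδ0, hδ⟩

theorem KLBound.mono_exponent {f : E → EReal} {xbar : E} {α β δ : ℝ} (h : KLBound f xbar α δ)
    (hδ : δ ≤ 1) (hαβ : α ≤ β) : KLBound f xbar β δ := by
  intro x hx h₁ h₂
  obtain ⟨ht, htδ⟩ := EReal.toReal_sub_mem_Ioo h₁ h₂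
  refine le_trans (ENNReal.ofReal_le_ofReal ?_) (h x hx h₁ h₂)
  exact mul_le_mul_of_nonneg_left (Real.rpow_le_rpow_of_exponent_ge ht (htδ.le.trans hδ) hαβ)
    (ht.trans htδ).le

theorem klAt_iInf {ι : Type*} [Finite ι] {g : ι → E → EReal} {α : ι → ℝ} {β : ℝ} {xbar : E}
    (hg : ∀ i, LowerSemicontinuous (g i))
    (hKL : ∀ i, g i xbar = ⨅ j, g j xbar → KLAt (g i) xbar (α i)) (hαβ : ∀ i, α i ≤ β) :
    KLAt (fun x => ⨅ i, g i x) xbar β := by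
  set f := fun x => ⨅ i, g i x
  have hpiece : ∀ i, ∀ᶠ δ in 𝓝[>] (0 : ℝ), ∀ x, ‖x - xbar‖ ≤ δ → f xbar < f x →
      f x < f xbar + δ → g i x = f x →
        ENNReal.ofReal (δ * (f x - f xbar).toReal ^ β) ≤ Metric.infEDist 0 (limSubdiff (g i) x) := by
    intro i
    rcases (iInf_le (fun j => g j xbar) i).eq_or_lt with hact | hinact
    · filter_upwards [klAt_iff_eventually_klBound.1 (hKL i hact.symm), Ioo_mem_nhdsGT one_pos]
        with δ hδ hδ1 x hx h₁ h₂ hi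
      have := (hδ.mono_exponent hδ1.2.le (hαβ i)) x hx (by rwa [hi, ← hact]) (by rwa [hi, ← hact])
      rwa [hi, ← hact] at this
    · obtain ⟨m, hfm, hmg⟩ := exists_between hinact
      filter_upwards [nhdsWithin_le_nhds (eventually_closedBall_subset (hg i xbar m hmg)),
        nhdsWithin_le_nhds (EReal.eventually_add_coe_lt hfm)] with δ hball hδm x hx _ h₂ hi
      have hmx : m < g i x := hball (mem_closedBall_iff_norm.2 hx)
      exact absurd (hi ▸ h₂.trans hδm) hmx.not_gt
  rw [klAt_iff_eventually_klBound]
  filter_upwards [eventually_all.2 hpiece] with δ hδ x hx h₁ h₂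
  refine Metric.le_infEDist.2 fun v hv => ?_
  obtain ⟨i, hi, hvi⟩ :=
    exists_mem_limSubdiff_of_mem_limSubdiff_iInf (fun i => (hg i).lowerSemicontinuousAt x) hv
  exact (hδ i x hx h₁ h₂ hi).trans (Metric.infEDist_le_edist_of_mem hvi)

theorem stmt_2_general {n r : ℕ} (g : Fin r → (EuclideanSpace ℝ (Fin n) → EReal))
    (hclosed : ∀ i, LowerSemicontinuous (g i))
    (hdom : ∀ i, edomain (g i) = subdiffDom (g i))
    (f : EuclideanSpace ℝ (Fin n) → EReal) (hf : ∀ x, f x = ⨅ i, g i x)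
    (α : Fin r → ℝ)
    (hKL : ∀ i, IsKL (g i) (α i))
    (αmax : ℝ) (hmax2 : ∀ i, α i ≤ αmax) :
    IsKL f αmax := by
  obtain rfl : f = fun x => ⨅ i, g i x := funext hf
  rintro xbar ⟨v, hv⟩
  refine klAt_iInf hclosed (fun i hi => hKL i xbar ?_) hmax2
  rw [← hdom i]
  exact show g i xbar < ⊤ from hi ▸ hv.1

/-- The minimum of finitely many KL functions with `dom f_i = dom ∂f_i`
is a KL function with the maximal exponent. -/
theorem stmt_2 {n r : ℕ} (hr : 0 < r) (g : Fin r → (EuclideanSpace ℝ (Fin n) → EReal))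
    (hproper : ∀ i, ProperFn (g i)) (hclosed : ∀ i, LowerSemicontinuous (g i))
    (hdom : ∀ i, edomain (g i) = subdiffDom (g i))
    (f : EuclideanSpace ℝ (Fin n) → EReal) (hf : ∀ x, f x = ⨅ i, g i x)
    (hcont : ContinuousOn f (subdiffDom f))
    (α : Fin r → ℝ) (hα : ∀ i, 0 ≤ α i ∧ α i < 1)
    (hKL : ∀ i, IsKL (g i) (α i))
    (αmax : ℝ) (hmax1 : ∃ i, αmax = α i) (hmax2 : ∀ i, α i ≤ αmax) :
    IsKL f αmax :=
  stmt_2_general g hclosed hdom f hf α hKL αmax hmax2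

end
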